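/- Let Θ be a finite simple oriented graph containing no two distinct simple cycles connected by an oriented path of length ≥ 0, and fix any linear order on its vertex set V. Let x be a non-cycle vertex of Θ that is connected with some simple cycle by an oriented path, and let k_x be defined as in the context. Then in every reduced word w ∈ V*, the letter x occurs at most k_x times. -/

import Mathlib

open Relation

section Defs

variable {V : Type*}

/-- Simplicity of an oriented graph: no loops and at most one direction between two vertices. -/
def SimpleOriented (E : V → V → Prop) : Prop := ∀ x y, E x y → ¬ E y x

/-- A simple cycle: pairwise distinct vertices `x₁ → x₂ → ⋯ → x_N → x₁` with `N ≥ 3`. -/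
def IsSimpleCycle (E : V → V → Prop) (c : List V) : Prop :=
  3 ≤ c.length ∧ c.Nodup ∧ c.Chain' E ∧ ∀ h : c ≠ [], E (c.getLast h) (c.head h)

def IsCycleVertex (E : V → V → Prop) (x : V) : Prop := ∃ c, IsSimpleCycle E c ∧ x ∈ c

/-- Two distinct simple cycles connected by an oriented path of length ≥ 0. -/
def TwoCyclesConnected (E : V → V → Prop) : Prop :=
  ∃ c c' : List V, IsSimpleCycle E c ∧ IsSimpleCycle E c' ∧ ¬ c.IsRotated c' ∧
    ∃ a ∈ c, ∃ b ∈ c', Relation.ReflTransGen E a b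

/-- Defining relations of the Hecke–Kiselman monoid. -/
def hkRel (E : V → V → Prop) : FreeMonoid V → FreeMonoid V → Prop := fun a b =>
  (∃ x : V, a = .of x * .of x ∧ b = .of x) ∨
  (∃ x y : V, x ≠ y ∧ ¬ E x y ∧ ¬ E y x ∧ a = .of x * .of y ∧ b = .of y * .of x) ∨
  (∃ x y : V, E x y ∧ a = .of x * .of y * .of x ∧ b = .of x * .of y) ∨
  (∃ x y : V, E x y ∧ a = .of y * .of x * .of y ∧ b = .of x * .of y)

/-- The Hecke–Kiselman monoid of the graph. -/
def HKmonoid (E : V → V → Prop) : Type _ := (conGen (hkRel E)).Quotient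

instance (E : V → V → Prop) : Monoid (HKmonoid E) :=
  inferInstanceAs (Monoid (conGen (hkRel E)).Quotient)

/-- Canonical projection from the free monoid. -/
def hkProj (E : V → V → Prop) : FreeMonoid V →* HKmonoid E := (conGen (hkRel E)).mk'

/-- Image in `HKmonoid E` of a word over `V`. -/
def hkWord (E : V → V → Prop) (w : List V) : HKmonoid E := hkProj E (FreeMonoid.ofList w)

/-- Growth function: number of elements represented by words of length at most `n`. -/
noncomputable def hkGrowth (E : V → V → Prop) (n : ℕ) : ℕ :=
  (hkWord E '' {w : List V | w.length ≤ n}).ncard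

/-- `w ↛ t` -/
def NArrowTo (E : V → V → Prop) (w : List V) (t : V) : Prop :=
  t ∉ w ∧ ∀ x ∈ w, ¬ E x t

/-- `t ↛ w` -/
def NArrowFrom (E : V → V → Prop) (t : V) (w : List V) : Prop :=
  t ∉ w ∧ ∀ y ∈ w, ¬ E t y

/-- `t ↮ w` -/
def NConn (E : V → V → Prop) (t : V) (w : List V) : Prop :=
  NArrowTo E w t ∧ NArrowFrom E t w

/-- A word is reduced if it contains no factor of the forms (i), (ii), (iii). -/
def Reduced (E : V → V → Prop) (lt : V → V → Prop) (w : List V) : Prop :=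
  (¬ ∃ (p u q : List V) (t : V), w = p ++ [t] ++ u ++ [t] ++ q ∧ NArrowTo E u t) ∧
  (¬ ∃ (p u q : List V) (t : V), w = p ++ [t] ++ u ++ [t] ++ q ∧ NArrowFrom E t u) ∧
  (¬ ∃ (p u q : List V) (t₁ t₂ : V), w = p ++ [t₁] ++ u ++ [t₂] ++ q ∧ lt t₂ t₁ ∧
      NConn E t₂ ([t₁] ++ u))

/-- `m`-th power of a word. -/
def wpow (w : List V) (m : ℕ) : List V := (List.replicate m w).flatten

open Classical in
/-- The number `k_x` of paths ending at (resp. beginning at) `x`. -/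
noncomputable def kx (E : V → V → Prop) (x : V) : ℕ :=
  if ∃ a, IsCycleVertex E a ∧ Relation.ReflTransGen E x a then
    {p : List V | p ≠ [] ∧ p.Chain' E ∧ p.getLast? = some x}.ncard
  else
    {p : List V | p ≠ [] ∧ p.Chain' E ∧ p.head? = some x}.ncard

open Classical in
/-- The invariant `s(Θ) = Σ_j (Σ_{x ∈ 𝒜_j} k_x + 1)` with respect to an enumeration of
the simple cycles; `𝒜_j` is the set of (non-cycle) vertices connected by an edge with `C_j`. -/
noncomputable def sTheta [Fintype V] (E : V → V → Prop) {k : ℕ} (cycles : Fin k → List V) : ℕ :=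
  ∑ j : Fin k,
    ((∑ x ∈ Finset.univ.filter
        (fun x => ¬ IsCycleVertex E x ∧ ∃ a ∈ cycles j, E x a ∨ E a x), kx E x) + 1)

end Defs

/-! Between two consecutive occurrences of `x` in a reduced word, rule (i) forces an
in-neighbour `y → x`, so `#x ≤ 1 + Σ_{y → x} #y`. If `x` leads to a cycle, no cycle vertex lies
upstream of `x` (it would either connect two cycles or put `x` on a cycle); hence paths ending at
`x` are simple, there are finitely many, and extending the paths ending at each `y → x` by one
edge shows `k_x ≥ 1 + Σ_{y → x} k_y`. Since `E` is well founded on non-cycle vertices, induction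
gives `#x ≤ k_x`. If instead a cycle leads to `x`, the same argument applies to the reversed
graph, with rule (ii) in place of (i). -/

section

variable {V : Type*} {E : V → V → Prop}

theorem exists_isChain_nodup_of_reflTransGen {r : V → V → Prop} {a b : V}
    (h : ReflTransGen r a b) :
    ∃ l, (a :: l).IsChain r ∧ (a :: l).Nodup ∧ (a :: l).getLast (List.cons_ne_nil _ _) = b := by
  induction h using ReflTransGen.head_induction_on with
  | refl => exact ⟨[], .singleton _, List.nodup_singleton _, rfl⟩
  | @head c d hcd _ ih =>
    obtain ⟨l, hch, hnd, hlast⟩ := ih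
    by_cases hc : c ∈ d :: l
    · obtain ⟨s, t, hst⟩ := List.append_of_mem hc
      rw [hst] at hch hnd
      refine ⟨t, hch.infix (List.suffix_append _ _).isInfix,
        hnd.sublist (List.sublist_append_right _ _), ?_⟩
      rw [← hlast]
      simp [hst]
    · exact ⟨d :: l, .cons_cons hcd hch, List.nodup_cons.2 ⟨hc, hnd⟩,
        by rwa [List.getLast_cons_cons]⟩

theorem isCycleVertex_of_transGen_self (hs : SimpleOriented E) {x : V} (h : TransGen E x x) :
    IsCycleVertex E x := by
  obtain ⟨b, hxb, hbx⟩ := TransGen.tail'_iff.1 h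
  obtain ⟨l, hch, hnd, hlast⟩ := exists_isChain_nodup_of_reflTransGen hxb
  refine ⟨x :: l, ⟨?_, hnd, hch, fun _ => hlast ▸ hbx⟩, List.mem_cons_self⟩
  match l, hch, hlast with
  | [], _, rfl => exact absurd hbx fun h => hs _ _ h h
  | [_], hch, rfl => exact absurd hbx (hs _ _ (List.isChain_pair.1 hch))
  | _ :: _ :: _, _, _ => simp

theorem IsSimpleCycle.reflTransGen {c : List V} (hc : IsSimpleCycle E c) {a b : V}
    (ha : a ∈ c) (hb : b ∈ c) : ReflTransGen E a b := by
  obtain ⟨hlen, -, hch, hclose⟩ := hc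
  have hne : c ≠ [] := List.ne_nil_of_length_pos (by omega)
  have to_last : ReflTransGen E a (c.getLast hne) :=
    hch.backwards_induction (ReflTransGen E · (c.getLast hne)) c (fun _ _ h h' => h'.head h)
      (fun _ => .refl) a ha
  have from_head : ReflTransGen E (c.head hne) b :=
    hch.induction (ReflTransGen E (c.head hne) ·) c (fun _ _ h h' => h'.tail h)
      (fun _ => .refl) b hb
  exact (to_last.tail (hclose hne)).trans from_head

theorem not_reflTransGen_of_isCycleVertex (hs : SimpleOriented E) (hnc : ¬ TwoCyclesConnected E)
    {x a z : V} (hx : ¬ IsCycleVertex E x) (ha : IsCycleVertex E a) (hxa : ReflTransGen E x a)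
    (hz : IsCycleVertex E z) : ¬ ReflTransGen E z x := by
  intro hzx
  obtain ⟨C, hC, hzC⟩ := hz
  obtain ⟨C', hC', haC'⟩ := ha
  have hrot : C.IsRotated C' := by
    by_contra hrot
    exact hnc ⟨C, C', hC, hC', hrot, z, hzC, a, haC', hzx.trans hxa⟩
  have hxz : ReflTransGen E x z := hxa.trans (hC.reflTransGen (hrot.mem_iff.2 haC') hzC)
  rcases reflTransGen_iff_eq_or_transGen.1 hxz with rfl | hxz
  · exact hx ⟨C, hC, hzC⟩
  · exact hx (isCycleVertex_of_transGen_self hs (hxz.trans_left hzx))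

theorem List.IsChain.nodup_of_forall_not_transGen {r : V → V → Prop} {l : List V}
    (hl : l.IsChain r) (h : ∀ a ∈ l, ¬ TransGen r a a) : l.Nodup := by
  induction l with
  | nil => exact .nil
  | cons a t ih =>
    refine List.nodup_cons.2
      ⟨fun hat => ?_, ih hl.tail fun b hb => h b (List.mem_cons_of_mem _ hb)⟩
    obtain ⟨b, t, rfl⟩ := List.exists_cons_of_ne_nil (List.ne_nil_of_mem hat)
    have hba : ReflTransGen r b a :=
      hl.tail.induction (ReflTransGen r b ·) _ (fun _ _ h h' => h'.tail h) (fun _ => .refl) a hat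
    exact h a List.mem_cons_self (.head' (List.isChain_cons_cons.1 hl).1 hba)

def pathsTo (E : V → V → Prop) (x : V) : Set (List V) :=
  {p | p ≠ [] ∧ p.IsChain E ∧ p.getLast? = some x}

theorem reflTransGen_of_mem_pathsTo {x a : V} {p : List V} (hp : p ∈ pathsTo E x) (ha : a ∈ p) :
    ReflTransGen E a x := by
  obtain ⟨hne, hch, hlast⟩ := hp
  rw [List.getLast?_eq_some_getLast hne, Option.some_inj] at hlast
  exact hch.backwards_induction (ReflTransGen E · x) p (fun _ _ h h' => h'.head h)
    (fun _ => hlast ▸ .refl) a ha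

theorem pathsTo_finite [Fintype V] (hs : SimpleOriented E) (hnc : ¬ TwoCyclesConnected E)
    {x a : V} (hx : ¬ IsCycleVertex E x) (ha : IsCycleVertex E a) (hxa : ReflTransGen E x a) :
    (pathsTo E x).Finite := by
  refine (List.finite_length_le V (Fintype.card V)).subset fun p hp => ?_
  refine (hp.2.1.nodup_of_forall_not_transGen fun b hb hbb => ?_).length_le_card
  exact not_reflTransGen_of_isCycleVertex hs hnc hx ha hxa (isCycleVertex_of_transGen_self hs hbb)
    (reflTransGen_of_mem_pathsTo hp hb)

theorem one_add_sum_ncard_pathsTo_le {x : V} (hfin : (pathsTo E x).Finite) {P : Finset V}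
    (hP : ∀ y ∈ P, E y x) : 1 + ∑ y ∈ P, (pathsTo E y).ncard ≤ (pathsTo E x).ncard := by
  set extend : V → Set (List V) := fun y => (· ++ [x]) '' pathsTo E y
  have extend_subset : ∀ y ∈ P, extend y ⊆ pathsTo E x := by
    rintro y hy _ ⟨q, ⟨hne, hch, hlast⟩, rfl⟩
    refine ⟨by simp, hch.append (.singleton x) fun a ha b hb => ?_, List.getLast?_concat⟩
    simp_all
  have single_notMem : [x] ∉ ⋃ y ∈ P, extend y := by
    simp only [Set.mem_iUnion, not_exists]
    rintro y - ⟨q, hq, hqx⟩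
    exact hq.1 (List.append_eq_singleton_iff.1 hqx |>.resolve_right (by simp)).1
  have disjoint : (P : Set V).PairwiseDisjoint extend := by
    rintro y - z - hyz
    refine Set.disjoint_left.2 ?_
    rintro _ ⟨q, hq, rfl⟩ ⟨q', hq', hqq'⟩
    rw [List.append_left_injective [x] hqq'] at hq'
    exact hyz (Option.some_inj.1 (hq.2.2.symm.trans hq'.2.2))
  have hfin' : ∀ y ∈ (P : Set V), (extend y).Finite :=
    fun y hy => hfin.subset (extend_subset y hy)
  calc 1 + ∑ y ∈ P, (pathsTo E y).ncard
      = 1 + ∑ y ∈ P, (extend y).ncard := by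
        simp only [extend, Set.ncard_image_of_injective _ (List.append_left_injective [x])]
    _ = (insert [x] (⋃ y ∈ (P : Set V), extend y)).ncard := by
        rw [Set.ncard_insert_of_notMem (by simpa using single_notMem)
          (P.finite_toSet.biUnion hfin'), P.finite_toSet.ncard_biUnion hfin' disjoint,
          finsum_mem_coe_finset, add_comm]
    _ ≤ (pathsTo E x).ncard := by
        refine Set.ncard_le_ncard (Set.insert_subset ⟨by simp, .singleton x, rfl⟩ ?_) hfin
        exact Set.iUnion₂_subset extend_subset

theorem List.count_cons_self_le_one_add_sum_count [DecidableEq V] {x : V} {P : Finset V}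
    {t : List V} (h : ∀ u, x :: u ++ [x] <:+: x :: t → x ∉ u → ∃ y ∈ P, y ∈ u) :
    (x :: t).count x ≤ 1 + ∑ y ∈ P, t.count y := by
  by_cases hxt : x ∈ t
  · obtain ⟨u, s, rfl, hxu⟩ := List.eq_append_cons_of_mem hxt
    obtain ⟨y, hyP, hyu⟩ := h u ⟨[], s, by simp⟩ hxu
    have ih : (x :: s).count x ≤ 1 + ∑ y ∈ P, s.count y :=
      count_cons_self_le_one_add_sum_count fun u' hu' =>
        h u' (hu'.trans (List.suffix_append (x :: u) (x :: s)).isInfix)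
    have hu : 1 ≤ ∑ z ∈ P, u.count z :=
      (List.count_pos_iff.2 hyu).trans_le
        (Finset.single_le_sum (f := (u.count ·)) (fun _ _ => Nat.zero_le _) hyP)
    have hs : ∑ z ∈ P, s.count z ≤ ∑ z ∈ P, (x :: s).count z :=
      Finset.sum_le_sum fun z _ => (List.sublist_cons_self x s).count_le z
    calc (x :: (u ++ x :: s)).count x = 1 + (x :: s).count x := by
          simp [List.count_append, List.count_eq_zero.2 hxu, Nat.add_comm]
      _ ≤ 1 + ∑ z ∈ P, u.count z + ∑ z ∈ P, (x :: s).count z := by omega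
      _ = 1 + ∑ z ∈ P, (u ++ x :: s).count z := by
          simp only [List.count_append, Finset.sum_add_distrib, Nat.add_assoc]
  · simp [List.count_eq_zero.2 hxt]
termination_by t.length
decreasing_by subst_vars; simp only [List.length_append, List.length_cons]; omega

theorem List.count_le_one_add_sum_count [DecidableEq V] {x : V} {P : Finset V} {w : List V}
    (h : ∀ u, x :: u ++ [x] <:+: w → x ∉ u → ∃ y ∈ P, y ∈ u) :
    w.count x ≤ 1 + ∑ y ∈ P, w.count y := by
  by_cases hxw : x ∈ w
  · obtain ⟨p, t, rfl, hxp⟩ := List.eq_append_cons_of_mem hxw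
    calc (p ++ x :: t).count x = (x :: t).count x := by
          simp [List.count_append, List.count_eq_zero.2 hxp]
      _ ≤ 1 + ∑ y ∈ P, t.count y := count_cons_self_le_one_add_sum_count fun u hu =>
          h u (hu.trans (List.suffix_append p _).isInfix)
      _ ≤ 1 + ∑ y ∈ P, (p ++ x :: t).count y := by
          gcongr
          exact ((List.sublist_cons_self x t).trans (List.sublist_append_right p _)).count_le _
  · simp [List.count_eq_zero.2 hxw]

theorem wellFounded_transGen_of_not_isCycleVertex [Finite V] (hs : SimpleOriented E) :
    WellFounded fun y x => TransGen E y x ∧ ¬ IsCycleVertex E x :=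
  have : IsTrans V fun y x => TransGen E y x ∧ ¬ IsCycleVertex E x :=
    ⟨fun _ _ _ h h' => ⟨h.1.trans h'.1, h'.2⟩⟩
  have : Std.Irrefl fun y x => TransGen E y x ∧ ¬ IsCycleVertex E x :=
    ⟨fun _ h => h.2 (isCycleVertex_of_transGen_self hs h.1)⟩
  Finite.wellFounded_of_trans_of_irrefl _

theorem count_le_ncard_pathsTo [Fintype V] [DecidableEq V] (hs : SimpleOriented E)
    (hnc : ¬ TwoCyclesConnected E) {x a : V} (hx : ¬ IsCycleVertex E x)
    (ha : IsCycleVertex E a) (hxa : ReflTransGen E x a) {w : List V}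
    (hw : ¬ ∃ (p u q : List V) (t : V), w = p ++ [t] ++ u ++ [t] ++ q ∧ NArrowTo E u t) :
    w.count x ≤ (pathsTo E x).ncard := by
  classical
  induction x using (wellFounded_transGen_of_not_isCycleVertex hs).induction with | _ x ih
  set P := Finset.univ.filter (E · x)
  have separated : ∀ u, x :: u ++ [x] <:+: w → x ∉ u → ∃ y ∈ P, y ∈ u := by
    rintro u ⟨p, q, rfl⟩ hxu
    by_contra hnone
    exact hw ⟨p, u, q, x, by simp, hxu, fun y hy hyx => hnone ⟨y, by simpa [P] using hyx, hy⟩⟩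
  have count_pred_le : ∀ y ∈ P, w.count y ≤ (pathsTo E y).ncard := fun y hy => by
    have hyx : E y x := (Finset.mem_filter.1 hy).2
    exact ih y ⟨.single hyx, hx⟩
      (fun hy => not_reflTransGen_of_isCycleVertex hs hnc hx ha hxa hy (.single hyx))
      (hxa.head hyx)
  calc w.count x ≤ 1 + ∑ y ∈ P, w.count y := List.count_le_one_add_sum_count separated
    _ ≤ 1 + ∑ y ∈ P, (pathsTo E y).ncard := by gcongr with y hy; exact count_pred_le y hy
    _ ≤ (pathsTo E x).ncard := one_add_sum_ncard_pathsTo_le (pathsTo_finite hs hnc hx ha hxa)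
          fun y hy => (Finset.mem_filter.1 hy).2

theorem SimpleOriented.flip (hs : SimpleOriented E) : SimpleOriented (flip E) :=
  fun x y hxy hyx => hs y x hxy hyx

theorem IsSimpleCycle.reverse {c : List V} (hc : IsSimpleCycle E c) :
    IsSimpleCycle (flip E) c.reverse := by
  obtain ⟨hlen, hnd, hch, hclose⟩ := hc
  refine ⟨by simpa using hlen, List.nodup_reverse.2 hnd, List.isChain_reverse.2 hch, fun h => ?_⟩
  simp only [List.getLast_reverse, List.head_reverse]
  exact hclose _

theorem isCycleVertex_flip {x : V} : IsCycleVertex (flip E) x ↔ IsCycleVertex E x :=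
  ⟨fun ⟨c, hc, hx⟩ => ⟨c.reverse, hc.reverse, List.mem_reverse.2 hx⟩,
    fun ⟨c, hc, hx⟩ => ⟨c.reverse, hc.reverse, List.mem_reverse.2 hx⟩⟩

theorem TwoCyclesConnected.of_flip (h : TwoCyclesConnected (flip E)) : TwoCyclesConnected E := by
  obtain ⟨c, c', hc, hc', hrot, a, ha, b, hb, hab⟩ := h
  exact ⟨c'.reverse, c.reverse, hc'.reverse, hc.reverse,
    fun h => hrot (List.isRotated_reverse_iff.1 h.symm), b, List.mem_reverse.2 hb, a,
    List.mem_reverse.2 ha, hab.swap⟩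

theorem kx_eq_ncard_pathsTo {x : V} (h : ∃ a, IsCycleVertex E a ∧ ReflTransGen E x a) :
    kx E x = (pathsTo E x).ncard := by
  rw [kx, if_pos h]
  rfl

theorem kx_eq_ncard_pathsTo_flip {x : V} (h : ¬ ∃ a, IsCycleVertex E a ∧ ReflTransGen E x a) :
    kx E x = (pathsTo (flip E) x).ncard := by
  rw [kx, if_neg h, ← Set.ncard_image_of_injective _ List.reverse_injective]
  congr 1
  ext p
  refine ⟨?_, ?_⟩
  · rintro ⟨q, ⟨hne, hch, hhead⟩, rfl⟩
    exact ⟨by simpa using hne, List.isChain_reverse.2 hch, by simpa using hhead⟩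
  · rintro ⟨hne, hch, hlast⟩
    exact ⟨p.reverse, ⟨by simpa using hne, List.isChain_reverse.2 hch, by simpa using hlast⟩,
      List.reverse_reverse p⟩

end

/-- Under the no-two-connected-cycles hypothesis, a non-cycle vertex `x`
connected with some simple cycle by an oriented path occurs at most `k_x` times in every
reduced word. -/
theorem noncycle_vertex_count_le_kx
    {V : Type*} [Fintype V] [LinearOrder V] (E : V → V → Prop)
    (hsimple : SimpleOriented E)
    (hnc : ¬ TwoCyclesConnected E)
    (x : V) (hx : ¬ IsCycleVertex E x)
    (hconn : ∃ a, IsCycleVertex E a ∧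
      (Relation.ReflTransGen E x a ∨ Relation.ReflTransGen E a x))
    (w : List V) (hred : Reduced E (· < ·) w) :
    w.count x ≤ kx E x := by
  obtain ⟨no_factor_to, no_factor_from, -⟩ := hred
  by_cases hdown : ∃ a, IsCycleVertex E a ∧ ReflTransGen E x a
  · obtain ⟨a, ha, hxa⟩ := hdown
    rw [kx_eq_ncard_pathsTo ⟨a, ha, hxa⟩]
    exact count_le_ncard_pathsTo hsimple hnc hx ha hxa no_factor_to
  · obtain ⟨a, ha, hax⟩ : ∃ a, IsCycleVertex E a ∧ ReflTransGen E a x := by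
      obtain ⟨a, ha, hxa | hax⟩ := hconn
      exacts [absurd ⟨a, ha, hxa⟩ hdown, ⟨a, ha, hax⟩]
    -- rule (ii) for `E` is, by definition, rule (i) for `flip E`
    rw [kx_eq_ncard_pathsTo_flip hdown]
    exact count_le_ncard_pathsTo hsimple.flip (mt TwoCyclesConnected.of_flip hnc)
      (mt isCycleVertex_flip.1 hx) (isCycleVertex_flip.2 ha) hax.swap no_factor_from
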